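/- For every even n ≥ 2, the number of binary strings s of length n that are both primitive and reflexive (i.e. ι(s) is a cyclic shift of s) equals Σ_{m | n/2, m odd} μ(m)·2^{n/(2m)}, where μ is the Möbius function. -/

import Mathlib

/-
If `s` is primitive and `ι(s) = Lᵏ(s)`, then `L²ᵏ(s) = s` forces `k ≡ n/2 (mod n)`, so we are
counting the primitive strings with `L^{n/2}(s) = ι(s)`. A string with `Lʲ(s) = ι(s)` is
determined by its first `j` digits, each of which can be chosen freely when `n/j` is even, so
there are `2ʲ` of them. A string with `L^{n/2}(s) = ι(s)` has a minimal period `p` with `n/p`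
odd, and Möbius inversion over the divisors of `n/p` detects `p = n`. Only odd divisors `m` of
`n/2` contribute, and the strings with `L^{n/2}(s) = ι(s)` fixed by `L^{n/m}` are exactly those
with `L^{n/(2m)}(s) = ι(s)`, of which there are `2^{n/(2m)}`.
-/

open Finset

namespace Necklaces

variable {n : ℕ}

/-- The cyclic left shift `L` on binary strings of length `n`. -/
def shiftL (s : Fin n → Bool) : Fin n → Bool :=
  fun i => s ⟨(i.val + 1) % n, Nat.mod_lt _ (Nat.lt_of_le_of_lt (Nat.zero_le _) i.isLt)⟩

/-- Digitwise inversion (complement) `ι`. -/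
def inv (s : Fin n → Bool) : Fin n → Bool := fun i => !(s i)

/-- A string is primitive if no nontrivial cyclic shift fixes it. -/
def Primitive (s : Fin n → Bool) : Prop :=
  ∀ k : ℕ, 0 < k → k < n → shiftL^[k] s ≠ s

/-- The necklace `⟨s⟩`: the orbit of `s` under cyclic shifts. -/
def necklace (s : Fin n → Bool) : Set (Fin n → Bool) :=
  {t | ∃ k : ℕ, t = shiftL^[k] s}

/-- The necklace inversion class `[s]`: the orbit of `s` under cyclic shifts and inversion. -/
def invClass (s : Fin n → Bool) : Set (Fin n → Bool) :=
  {t | ∃ k : ℕ, t = shiftL^[k] s ∨ t = inv (shiftL^[k] s)}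

/-- The number of 1's in `s`. -/
def onesCard (s : Fin n → Bool) : ℕ := (univ.filter (fun i => s i = true)).card

/-- The mod-2 partial sum map `Ξ`: the `i`-th digit of `Ξ(s)` is `s₁+⋯+sᵢ (mod 2)`. -/
def xi (s : Fin n → Bool) : Fin n → Bool :=
  fun i => decide (Odd ((Finset.Iic i).filter (fun j => s j = true)).card)

/-- `ι(s)` is a cyclic shift of `s`. -/
def ReflexiveStr (s : Fin n → Bool) : Prop := ∃ k : ℕ, shiftL^[k] s = inv s

/-- `s` consists of two copies of a primitive string of length `n/2`
with an odd number of 1's. -/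
def TwoCopies (s : Fin n → Bool) : Prop :=
  n % 2 = 0 ∧ shiftL^[n / 2] s = s ∧ (∀ k : ℕ, 0 < k → k < n / 2 → shiftL^[k] s ≠ s) ∧
    Odd ((univ.filter (fun i : Fin n => i.val < n / 2 ∧ s i = true)).card)

/-- `s` generates a necklace belonging to `Ñ⁺(n)`. -/
def GoodPlus (s : Fin n → Bool) : Prop :=
  (Primitive s ∧ Even (onesCard s)) ∨ TwoCopies s

/-- The set `Ñ⁺(n)` of necklaces. -/
def NtildePlus (n : ℕ) : Set (Set (Fin n → Bool)) :=
  {N | ∃ s : Fin n → Bool, GoodPlus s ∧ N = necklace s}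

/-- The set `N̄(n)` of necklace inversion classes of primitive strings. -/
def Nbar (n : ℕ) : Set (Set (Fin n → Bool)) :=
  {C | ∃ s : Fin n → Bool, Primitive s ∧ C = invClass s}

/-- Lexicographic order on strings, with `0 < 1` and the leftmost digit most significant. -/
def strLt (s t : Fin n → Bool) : Prop :=
  ∃ i : Fin n, (∀ j : Fin n, j < i → s j = t j) ∧ s i < t i

/-- Extended lexicographic order on extended strings `s^b`
(`b = false` encodes `−`, `b = true` encodes `+`). -/
def extLt (p q : (Fin n → Bool) × Bool) : Prop :=
  strLt p.1 q.1 ∨ (p.1 = q.1 ∧ p.2 < q.2)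

/-- The twisted shift operator `F`. -/
def twistF (s : Fin n → Bool) : Fin n → Bool :=
  if h : 0 < n then
    (if shiftL s ⟨0, h⟩ = true then shiftL s else inv (shiftL s))
  else s

/-- The extended twisted shift operator `F̃`. -/
def extF (p : (Fin n → Bool) × Bool) : (Fin n → Bool) × Bool :=
  if h : 0 < n then
    (if twistF p.1 ⟨n - 1, Nat.sub_lt h Nat.one_pos⟩ = true then (twistF p.1, p.2)
     else (twistF p.1, !p.2))
  else p

/-- Cyclic successor on `Fin n`. -/
def finSucc (i : Fin n) : Fin n :=
  ⟨(i.val + 1) % n, Nat.mod_lt _ (Nat.lt_of_le_of_lt (Nat.zero_le _) i.isLt)⟩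

open scoped Classical in
/-- The (0-based) lexicographic rank of `μ i` among `μ₁,…,μₙ`:
the number of indices `j` with `μ j` strictly smaller than `μ i`. -/
noncomputable def rankOf {X : Type*} (lt : X → X → Prop) (μ : Fin n → X) (i : Fin n) : ℕ :=
  (univ.filter (fun j => lt (μ j) (μ i))).card

/-- `σ` is the cyclic permutation `(r₁ r₂ ⋯ rₙ)` built from the ranks `rᵢ` of `μᵢ`:
`σ(rᵢ) = r_{i+1}` (indices mod `n`). -/
def BuiltFrom {X : Type*} (lt : X → X → Prop) (μ : Fin n → X) (σ : Equiv.Perm (Fin n)) : Prop :=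
  ∀ i j : Fin n, rankOf lt μ i = j.val → (σ j).val = rankOf lt μ (finSucc i)

/-- `σ` consists of a single `n`-cycle. -/
def IsCyclicPerm (σ : Equiv.Perm (Fin n)) : Prop :=
  ∀ x y : Fin n, ∃ k : ℕ, (σ ^ k) x = y

/-- `σ` is unimodal: decreasing on an initial segment, then increasing. -/
def IsUnimodal (σ : Equiv.Perm (Fin n)) : Prop :=
  ∃ m : Fin n, (∀ i j : Fin n, i ≤ j → j ≤ m → σ j ≤ σ i) ∧
    (∀ i j : Fin n, m ≤ i → i ≤ j → σ i ≤ σ j)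

/-- Cyclic unimodal permutations. -/
def CUPperm (σ : Equiv.Perm (Fin n)) : Prop := IsCyclicPerm σ ∧ IsUnimodal σ

/-- The string `A(σ)` obtained from the itinerary of `σ` (`+ ↦ 0`, `− ↦ 1`),
with the last digit chosen so that the total number of 1's is even.
(Here `m = σ⁻¹ 0` is the unique element with `σ m` least.) -/
def Astr [NeZero n] (σ : Equiv.Perm (Fin n)) : Fin n → Bool :=
  fun i =>
    if i.val + 1 < n then decide ((σ ^ (i.val + 1)) (σ⁻¹ 0) < σ⁻¹ 0)
    else decide (Odd ((univ.filter (fun j : Fin n =>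
      j.val + 1 < n ∧ (σ ^ (j.val + 1)) (σ⁻¹ 0) < σ⁻¹ 0)).card))

/-- The string used for `Ψ(σ)`: itinerary digits with the last digit chosen
so that the total number of 1's is odd. -/
def BstrOdd [NeZero n] (σ : Equiv.Perm (Fin n)) : Fin n → Bool :=
  fun i =>
    if i.val + 1 < n then decide ((σ ^ (i.val + 1)) (σ⁻¹ 0) < σ⁻¹ 0)
    else !(decide (Odd ((univ.filter (fun j : Fin n =>
      j.val + 1 < n ∧ (σ ^ (j.val + 1)) (σ⁻¹ 0) < σ⁻¹ 0)).card)))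

/-- The itinerary of a cyclic unimodal permutation: `none` encodes `⋆` (position `n`),
`some true` encodes `−` (i.e. `σⁱ(m) < m`), `some false` encodes `+` (i.e. `σⁱ(m) > m`). -/
def itin [NeZero n] (σ : Equiv.Perm (Fin n)) : Fin n → Option Bool :=
  fun i =>
    if i.val + 1 = n then none
    else some (decide ((σ ^ (i.val + 1)) (σ⁻¹ 0) < σ⁻¹ 0))

/-- `σ` arises from the class `C` by the construction defining `λ`:
for some representative `t` of `C` beginning with `1`, `σ` is the cyclic permutation
built from the lexicographic ranks of the iterates of `t` under `F` (non-reflexive case)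
or of `t^−` under `F̃` (reflexive case). -/
def LamRel [NeZero n] (C : Set (Fin n → Bool)) (σ : Equiv.Perm (Fin n)) : Prop :=
  ∃ t : Fin n → Bool, t 0 = true ∧ C = invClass t ∧
    ((¬ ReflexiveStr t ∧ BuiltFrom strLt (fun i : Fin n => twistF^[i.val] t) σ) ∨
     (ReflexiveStr t ∧ BuiltFrom extLt (fun i : Fin n => extF^[i.val] (t, false)) σ))

/-- `σ` arises from the representative `s` by the Weiss–Rogers construction `Φ`:
`σ` is the cyclic permutation built from the lexicographic ranks of
`νᵢ = ι(Ξ(L^{i-1}(s)))`. -/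
def PhiBuilt (s : Fin n → Bool) (σ : Equiv.Perm (Fin n)) : Prop :=
  BuiltFrom strLt (fun i : Fin n => inv (xi (shiftL^[i.val] s))) σ

end Necklaces

open Finset Function Fin.NatCast

open ArithmeticFunction in
theorem Function.sum_moebius_filter_isPeriodicPt {α : Type*} [DecidableEq α] {f : α → α} {x : α}
    {n : ℕ} (hn : 0 < n) (hx : IsPeriodicPt f n x) :
    ∑ m ∈ n.divisors with IsPeriodicPt f (n / m) x, moebius m =
      if minimalPeriod f x = n then 1 else 0 := by
  obtain ⟨e, he⟩ := hx.minimalPeriod_dvd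
  have hp : 0 < minimalPeriod f x := hx.minimalPeriod_pos hn
  have he0 : e ≠ 0 := by rintro rfl; omega
  have hfilter : {m ∈ n.divisors | IsPeriodicPt f (n / m) x} = e.divisors := by
    ext m
    simp only [mem_filter, Nat.mem_divisors, isPeriodicPt_iff_minimalPeriod_dvd]
    constructor
    · rintro ⟨⟨hmn, -⟩, hdvd⟩
      rw [Nat.dvd_div_iff_mul_dvd hmn, mul_comm, he, Nat.mul_dvd_mul_iff_left hp] at hdvd
      exact ⟨hdvd, he0⟩
    · rintro ⟨hme, -⟩
      have hmn : m ∣ n := he ▸ hme.mul_left _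
      refine ⟨⟨hmn, hn.ne'⟩, ?_⟩
      rw [Nat.dvd_div_iff_mul_dvd hmn, mul_comm, he]
      exact Nat.mul_dvd_mul_left _ hme
  rw [hfilter, ← coe_mul_zeta_apply, moebius_mul_coe_zeta, one_apply]
  conv_rhs => rw [he]
  simp [hp.ne']

lemma eq_xor_bodd_of_forall_add_eq_not {f : ℕ → Bool} {j : ℕ} (hf : ∀ a, f (a + j) = !f a)
    (a : ℕ) : f a = xor (f (a % j)) (a / j).bodd := by
  have key (q r : ℕ) : f (r + j * q) = xor (f r) q.bodd := by
    induction q with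
    | zero => simp
    | succ q ih => rw [Nat.mul_succ, ← add_assoc, hf, ih, Nat.bodd_succ, ← Bool.bne_not]
  rw [← key, Nat.mod_add_div]

namespace Necklaces

variable {n : ℕ}

lemma commute_shiftL_inv : Function.Commute (shiftL (n := n)) inv := fun _ => rfl

lemma involutive_inv : Involutive (inv (n := n)) := fun s => funext fun i => Bool.not_not (s i)

lemma shiftL_iterate_mul_of_eq_inv {s : Fin n → Bool} {j : ℕ} (hs : shiftL^[j] s = inv s)
    (t : ℕ) : shiftL^[j * t] s = inv^[t] s := by
  induction t with
  | zero => rfl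
  | succ t ih =>
    rw [Nat.mul_succ, iterate_add_apply, hs, (commute_shiftL_inv.iterate_left (j * t)).eq, ih,
      iterate_succ_apply']

lemma shiftL_iterate_mul_eq_inv_and_isPeriodicPt_iff {j m : ℕ} (hm : Odd m)
    {s : Fin n → Bool} :
    shiftL^[j * m] s = inv s ∧ IsPeriodicPt shiftL (2 * j) s ↔ shiftL^[j] s = inv s := by
  refine ⟨fun ⟨hinv, hper⟩ => ?_, fun hs => ⟨?_, ?_⟩⟩
  · obtain ⟨t, rfl⟩ := hm
    rwa [mul_add_one, ← mul_assoc, mul_comm j 2, add_comm, iterate_add_apply,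
      (hper.mul_const t).eq] at hinv
  · rw [shiftL_iterate_mul_of_eq_inv hs, involutive_inv.iterate_odd hm]
  · rw [IsPeriodicPt, IsFixedPt, mul_comm, shiftL_iterate_mul_of_eq_inv hs,
      involutive_inv.iterate_two_mul 1, id]

section NeZero

variable [NeZero n]

lemma shiftL_iterate_apply (s : Fin n → Bool) (k : ℕ) (i : Fin n) :
    shiftL^[k] s i = s (i + (k : Fin n)) := by
  induction k generalizing s with
  | zero => simp
  | succ k ih =>
    rw [iterate_succ_apply, ih (shiftL s)]
    show s _ = s _
    congr 1
    ext
    simp only [Fin.val_add, Fin.val_natCast]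
    rw [Nat.mod_add_mod, Nat.add_mod_mod, add_right_comm, Nat.add_mod_mod, add_assoc, add_comm 1 k]

lemma isPeriodicPt_shiftL_self (s : Fin n → Bool) : IsPeriodicPt shiftL n s :=
  funext fun i => by simp [shiftL_iterate_apply]

lemma primitive_iff_minimalPeriod_eq {s : Fin n → Bool} :
    Primitive s ↔ minimalPeriod shiftL s = n := by
  have hper := isPeriodicPt_shiftL_self s
  refine ⟨fun hs => ?_, fun hs k hk hkn hfix => ?_⟩
  · refine (hper.minimalPeriod_le (NeZero.pos n)).antisymm (not_lt.mp fun hlt => ?_)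
    exact hs _ (hper.minimalPeriod_pos (NeZero.pos n)) hlt iterate_minimalPeriod
  · exact hkn.not_ge (hs ▸ IsPeriodicPt.minimalPeriod_le hk hfix)

lemma inv_ne_self (s : Fin n → Bool) : inv s ≠ s :=
  fun h => Bool.not_ne_self (s 0) (congrFun h 0)

lemma exists_shiftL_iterate_eq_inv_iff {h : ℕ} (hn : n = 2 * h) {s : Fin n → Bool}
    (hs : Primitive s) : (∃ k, shiftL^[k] s = inv s) ↔ shiftL^[h] s = inv s := by
  refine ⟨fun ⟨k, hk⟩ => ?_, fun hh => ⟨h, hh⟩⟩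
  have h2k : IsPeriodicPt shiftL (2 * k) s := by
    rw [IsPeriodicPt, IsFixedPt, two_mul, iterate_add_apply, hk,
      (commute_shiftL_inv.iterate_left k).eq, hk, involutive_inv]
  obtain ⟨q, rfl⟩ : h ∣ k := by
    have := h2k.minimalPeriod_dvd
    rw [primitive_iff_minimalPeriod_eq.mp hs, hn] at this
    exact Nat.dvd_of_mul_dvd_mul_left two_pos this
  have hnq (r : ℕ) : IsPeriodicPt shiftL (h * (2 * r)) s := by
    rw [← mul_assoc, mul_comm h, ← hn]
    exact (isPeriodicPt_shiftL_self s).mul_const r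
  rcases Nat.even_or_odd' q with ⟨r, rfl | rfl⟩
  · exact absurd (hk.symm.trans (hnq r)) (inv_ne_self s)
  · rwa [mul_add_one, add_comm, iterate_add_apply, (hnq r).eq] at hk

lemma coe_filter_shiftL_iterate_eq_inv_and_minimalPeriod_eq {h : ℕ} (hn : n = 2 * h) :
    ↑({s | shiftL^[h] s = inv s ∧ minimalPeriod shiftL s = n} : Finset (Fin n → Bool)) =
      {s : Fin n → Bool | Primitive s ∧ ∃ k, shiftL^[k] s = inv s} := by
  ext s
  simp only [coe_filter, mem_univ, true_and, Set.mem_ofPred_eq, ← primitive_iff_minimalPeriod_eq]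
  exact ⟨fun ⟨hh, hp⟩ => ⟨hp, h, hh⟩,
    fun ⟨hp, hk⟩ => ⟨(exists_shiftL_iterate_eq_inv_iff hn hp).mp hk, hp⟩⟩

lemma card_shiftL_iterate_eq_inv {j : ℕ} (hj : 2 * j ∣ n) :
    #{s : Fin n → Bool | shiftL^[j] s = inv s} = 2 ^ j := by
  obtain ⟨c, hc⟩ : ∃ c, n = j * (2 * c) := hj.imp fun c hc => by rw [hc, mul_comm 2 j, mul_assoc]
  have hj0 : 0 < j := Nat.pos_of_ne_zero fun h0 => NeZero.ne n (by simp [hc, h0])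
  have hjn : j ≤ n := Nat.le_of_dvd (NeZero.pos n) ⟨2 * c, hc⟩
  let extend (t : Fin j → Bool) (a : ℕ) : Bool := xor (t ⟨a % j, Nat.mod_lt a hj0⟩) (a / j).bodd
  have extend_add (t : Fin j → Bool) (a : ℕ) : extend t (a + j) = !extend t a := by
    simp [extend, Nat.add_div_right _ hj0, Nat.bodd_succ]
  have extend_periodic (t : Fin j → Bool) : Periodic (extend t) n := fun a => by
    simp [extend, hc, Nat.add_mul_div_left _ _ hj0, Nat.bodd_add, Nat.bodd_mul]
  rw [show 2 ^ j = #(univ : Finset (Fin j → Bool)) by simp]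
  refine card_nbij' (fun s r => s (r : ℕ)) (fun t i => extend t i) (by simp) (fun t _ => ?_)
    (fun s hs => ?_) (fun t _ => ?_)
  · simp only [coe_filter, mem_univ, true_and, Set.mem_ofPred_eq]
    funext i
    rw [shiftL_iterate_apply, Fin.val_add, Fin.val_natCast, Nat.add_mod_mod,
      (extend_periodic t).map_mod_nat, extend_add]
    rfl
  · have hf (a : ℕ) : s ((a + j : ℕ) : Fin n) = !s a := by
      rw [Nat.cast_add, (shiftL_iterate_apply s j a).symm, (mem_filter.mp hs).2]
      rfl
    funext i
    conv_rhs => rw [← Fin.cast_val_eq_self i]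
    exact (eq_xor_bodd_of_forall_add_eq_not (f := fun a : ℕ => s a) hf i).symm
  · funext r
    simp [extend, Nat.mod_eq_of_lt r.isLt, Nat.div_eq_of_lt r.isLt,
      Nat.mod_eq_of_lt (r.isLt.trans_le hjn)]

lemma card_filter_shiftL_iterate_eq_inv_and_isPeriodicPt {h m : ℕ} (hn : n = 2 * h)
    (hmh : m ∣ h) (hm : Odd m) :
    #{s : Fin n → Bool | shiftL^[h] s = inv s ∧ IsPeriodicPt shiftL (n / m) s} = 2 ^ (h / m) := by
  obtain ⟨j, rfl⟩ := hmh
  have hm0 : 0 < m := hm.pos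
  have hnm : n / m = 2 * j := by rw [hn, mul_left_comm, Nat.mul_div_cancel_left _ hm0]
  rw [hnm, Nat.mul_div_cancel_left _ hm0, mul_comm m j]
  simp_rw [shiftL_iterate_mul_eq_inv_and_isPeriodicPt_iff hm]
  exact card_shiftL_iterate_eq_inv ⟨m, by rw [hn]; ring⟩

open ArithmeticFunction in
lemma sum_moebius_filter_odd_divisors {h : ℕ} (hn : n = 2 * h) {s : Fin n → Bool}
    (hs : shiftL^[h] s = inv s) :
    ∑ m ∈ h.divisors.filter (fun m => m % 2 = 1) with IsPeriodicPt shiftL (n / m) s, moebius m =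
      if minimalPeriod shiftL s = n then 1 else 0 := by
  rw [← sum_moebius_filter_isPeriodicPt (NeZero.pos n) (isPeriodicPt_shiftL_self s), filter_filter]
  congr 1
  ext m
  simp only [mem_filter, Nat.mem_divisors]
  constructor
  · rintro ⟨⟨hmh, -⟩, -, hper⟩
    exact ⟨⟨hn ▸ Dvd.dvd.mul_left hmh 2, NeZero.ne n⟩, hper⟩
  · rintro ⟨⟨hmn, hn0⟩, hper⟩
    -- for even `m`, periodicity under `L^{n/m}` would give `L^{n/2}(s) = s`
    have hodd : m % 2 = 1 := by
      by_contra hev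
      obtain ⟨m', rfl⟩ : 2 ∣ m := by omega
      have hm'h : m' ∣ h := Nat.dvd_of_mul_dvd_mul_left two_pos (hn ▸ hmn)
      rw [show n / (2 * m') = h / m' by rw [hn, Nat.mul_div_mul_left _ _ two_pos]] at hper
      exact inv_ne_self s (hs.symm.trans (Nat.div_mul_cancel hm'h ▸ hper.mul_const m'))
    have hmh : m ∣ h :=
      (Nat.coprime_two_right.mpr (Nat.odd_iff.mpr hodd)).dvd_of_dvd_mul_left (hn ▸ hmn)
    exact ⟨⟨hmh, by omega⟩, hodd, hper⟩

end NeZero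

open ArithmeticFunction in
/-- For every even `n ≥ 2`, the number of binary strings of length `n`
that are both primitive and reflexive (i.e. `ι(s)` is a cyclic shift of `s`) equals
`Σ_{m ∣ n/2, m odd} μ(m)·2^{n/(2m)}`. -/
theorem card_primitive_reflexive (n : ℕ) (h2 : 2 ≤ n) (hev : n % 2 = 0) :
    (({s : Fin n → Bool | Primitive s ∧ ∃ k : ℕ, shiftL^[k] s = inv s}.ncard : ℕ) : ℤ) =
      ∑ m ∈ (n / 2).divisors.filter (fun m => m % 2 = 1), moebius m * 2 ^ (n / (2 * m)) := by
  have : NeZero n := ⟨by omega⟩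
  have hn : n = 2 * (n / 2) := by omega
  set h := n / 2
  set A : Finset (Fin n → Bool) := {s | shiftL^[h] s = inv s}
  set D := h.divisors.filter (fun m => m % 2 = 1)
  rw [← coe_filter_shiftL_iterate_eq_inv_and_minimalPeriod_eq hn, Set.ncard_coe_finset,
    ← filter_filter, natCast_card_filter]
  calc ∑ s ∈ A, (if minimalPeriod shiftL s = n then 1 else 0 : ℤ)
      = ∑ s ∈ A, ∑ m ∈ D with IsPeriodicPt shiftL (n / m) s, moebius m :=
        sum_congr rfl fun s hs => (sum_moebius_filter_odd_divisors hn (mem_filter.mp hs).2).symm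
    _ = ∑ m ∈ D, ∑ s ∈ A with IsPeriodicPt shiftL (n / m) s, moebius m :=
        sum_comm' (by simp; tauto)
    _ = _ := sum_congr rfl fun m hm => by
        obtain ⟨⟨hmh, -⟩, hodd⟩ := by simpa [D] using hm
        rw [sum_const, filter_filter, card_filter_shiftL_iterate_eq_inv_and_isPeriodicPt hn hmh
          (Nat.odd_iff.mpr hodd), nsmul_eq_mul, mul_comm, hn, Nat.mul_div_mul_left _ _ two_pos]
        norm_cast

end Necklaces
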